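/- Let α be an m×n real matrix and φ a nonincreasing approximation function such that α is not φ-approximable (i.e., there are at most finitely many (p,q) ∈ ℤ^m × (ℤ^n \ {0}) with ‖αq + p‖ ≤ φ(‖q‖), and no (p,q) with q ≠ 0 and αq + p = 0). With Λ_Q = g_Q u_α ℤ^{m+n} and Φ(q) = q^{n/m} φ(q), for all sufficiently large Q ≥ 1 the only lattice point of Λ_Q in the box {(x,y) ∈ ℝ^m×ℝ^n : ‖x‖ ≤ 2^{−n/m} Φ(2Q), ‖y‖ ≤ 2} is the origin. -/

import Mathlib

/-!
Since `α` has only finitely many `φ`-approximations and none of them is exact, their residuals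
`‖αq + p‖` are bounded below by some `ε > 0`. On the other hand, simultaneous Dirichlet
approximation of one column of `α` gives, for every `c > 0`, infinitely many `(p, q)` with
`‖αq + p‖ ≤ c`; hence `φ` eventually drops below `min ε 1`. A point of `Λ_Q` in the box comes from
`(p, q)` with `‖q‖ ≤ 2Q` and `‖αq + p‖ ≤ φ(2Q) ≤ φ(‖q‖)`. For large `Q` this is `< min ε 1`, so
`q ≠ 0` would give a `φ`-approximation with residual below `ε`, and `q = 0` forces `‖p‖ < 1`.
-/

/-- The Euclidean norm of a vector in `Fin k → ℝ`. -/
noncomputable def euclNorm {k : ℕ} (v : Fin k → ℝ) : ℝ :=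
  Real.sqrt (∑ i, (v i) ^ 2)

section euclNorm

variable {k : ℕ}

theorem euclNorm_eq_norm (v : Fin k → ℝ) :
    euclNorm v = ‖(WithLp.toLp 2 v : EuclideanSpace ℝ (Fin k))‖ := by
  simp [euclNorm, EuclideanSpace.norm_eq]

theorem euclNorm_const_mul (t : ℝ) (v : Fin k → ℝ) :
    euclNorm (fun i => t * v i) = |t| * euclNorm v := by
  simp only [euclNorm_eq_norm, ← smul_eq_mul, ← Pi.smul_def, WithLp.toLp_smul, norm_smul,
    Real.norm_eq_abs]

theorem euclNorm_le_sqrt_card_mul {v : Fin k → ℝ} {δ : ℝ} (hδ : 0 ≤ δ) (hv : ∀ i, |v i| ≤ δ) :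
    euclNorm v ≤ √k * δ := by
  rw [euclNorm, ← Real.sqrt_sq hδ, ← Real.sqrt_mul k.cast_nonneg]
  gcongr
  calc ∑ i, v i ^ 2 ≤ ∑ _i : Fin k, δ ^ 2 := by
        refine Finset.sum_le_sum fun i _ => ?_
        exact sq_le_sq' (abs_le.mp (hv i)).1 (abs_le.mp (hv i)).2
    _ = k * δ ^ 2 := by simp

theorem one_le_euclNorm_intCast {p : Fin k → ℤ} (hp : p ≠ 0) :
    1 ≤ euclNorm fun i => (p i : ℝ) := by
  obtain ⟨i, hi⟩ := Function.ne_iff.mp hp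
  calc (1 : ℝ) ≤ |(p i : ℝ)| := by exact_mod_cast Int.one_le_abs hi
    _ ≤ euclNorm fun i => (p i : ℝ) := by
      rw [euclNorm_eq_norm]
      exact PiLp.norm_apply_le (WithLp.toLp 2 fun i => (p i : ℝ)) i

theorem euclNorm_pos {v : Fin k → ℝ} (hv : v ≠ 0) : 0 < euclNorm v := by
  rw [euclNorm_eq_norm]
  exact norm_pos_iff.mpr (by simpa using hv)

end euclNorm

theorem Set.Finite.exists_pos_forall_le {α β : Type*} [LinearOrder β] [Zero β] [NoMaxOrder β]
    {s : Set α} (hs : s.Finite) {f : α → β} (hf : ∀ x ∈ s, 0 < f x) :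
    ∃ ε > 0, ∀ x ∈ s, ε ≤ f x := by
  rcases s.eq_empty_or_nonempty with rfl | hne
  · obtain ⟨ε, hε⟩ := exists_gt (0 : β)
    exact ⟨ε, hε, by simp⟩
  · obtain ⟨a, ha, hmin⟩ := Set.exists_min_image s f hs hne
    exact ⟨f a, hf a ha, hmin⟩

theorem Real.rpow_neg_mul_mul_rpow {a x : ℝ} (ha : 0 < a) (hx : 0 ≤ x) (s : ℝ) :
    a ^ (-s) * (a * x) ^ s = x ^ s := by
  rw [Real.mul_rpow ha.le hx, Real.rpow_neg ha.le, inv_mul_cancel_left₀ (by positivity)]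

theorem exists_nat_pos_abs_mul_add_intCast_lt {ι : Type*} [Finite ι] (v : ι → ℝ) {ε : ℝ}
    (hε : 0 < ε) : ∃ d : ℕ, 0 < d ∧ ∃ p : ι → ℤ, ∀ i, |d * v i + p i| < ε := by
  obtain ⟨N, hN⟩ := exists_nat_gt ε⁻¹
  have hN0 : (0 : ℝ) < N := (inv_pos.mpr hε).trans hN
  -- pigeonhole: sort `k • v` into `N ^ ι` boxes according to the digits `⌊N · fract (k vᵢ)⌋`
  set box : ℕ → ι → ℤ := fun k i => ⌊Int.fract (k * v i) * N⌋
  have hbox : ∀ k, box k ∈ Set.univ.pi fun _ => Set.Ico (0 : ℤ) N := fun k i _ =>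
    ⟨Int.floor_nonneg.mpr (by positivity),
      Int.floor_lt.mpr (by push_cast; nlinarith [Int.fract_lt_one (k * v i)])⟩
  obtain ⟨a, b, hab, hbox_eq⟩ := Set.Finite.exists_lt_map_eq_of_forall_mem hbox
    (Set.Finite.pi fun _ => Set.finite_Ico _ _)
  refine ⟨b - a, Nat.sub_pos_of_lt hab, fun i => ⌊a * v i⌋ - ⌊b * v i⌋, fun i => ?_⟩
  have hfract : |Int.fract (b * v i) * N - Int.fract (a * v i) * N| < 1 :=
    Int.abs_sub_lt_one_of_floor_eq_floor (congrFun hbox_eq i).symm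
  rw [← sub_mul, abs_mul, abs_of_pos hN0] at hfract
  calc |((b - a : ℕ) : ℝ) * v i + ((⌊a * v i⌋ - ⌊b * v i⌋ : ℤ) : ℝ)|
      = |Int.fract (b * v i) - Int.fract (a * v i)| := by
        rw [Nat.cast_sub hab.le, Int.fract, Int.fract]; push_cast; ring_nf
    _ < (N : ℝ)⁻¹ := by rwa [← one_div, lt_div_iff₀ hN0]
    _ < ε := (inv_lt_comm₀ hN0 hε).mpr hN

def approxSet {m n : ℕ} (α : Matrix (Fin m) (Fin n) ℝ) (ψ : ℝ → ℝ) :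
    Set ((Fin m → ℤ) × (Fin n → ℤ)) :=
  {pq | pq.2 ≠ 0 ∧ euclNorm (α.mulVec (fun j => (pq.2 j : ℝ)) + (fun i => (pq.1 i : ℝ))) ≤
    ψ (euclNorm fun j => (pq.2 j : ℝ))}

theorem approxSet_const_infinite {m n : ℕ} (hn : 0 < n) (α : Matrix (Fin m) (Fin n) ℝ) {c : ℝ}
    (hc : 0 < c) : (approxSet α fun _ => c).Infinite := by
  intro hfin
  set j₀ : Fin n := ⟨0, hn⟩
  obtain ⟨M, hM⟩ := (hfin.image fun pq => pq.2 j₀).bddAbove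
  -- Dirichlet applied to `L` times the column `j₀`, with `L > M`, yields `q = L d eⱼ₀` beyond `M`
  set L : ℕ := M.toNat + 1
  set δ : ℝ := c / (√m + 1)
  have hδ : 0 < δ := by positivity
  obtain ⟨d, hd, p, hp⟩ := exists_nat_pos_abs_mul_add_intCast_lt (fun i => L * α i j₀) hδ
  set q : Fin n → ℤ := Pi.single j₀ (L * d : ℤ)
  have hq_cast : (fun j => (q j : ℝ)) = Pi.single j₀ ((L * d : ℕ) : ℝ) := by
    ext j
    rcases eq_or_ne j j₀ with rfl | hj <;> simp [q, *]
  have hmem : (p, q) ∈ approxSet α fun _ => c := by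
    refine ⟨by simp [q]; positivity, ?_⟩
    calc euclNorm (α.mulVec (fun j => (q j : ℝ)) + fun i => (p i : ℝ)) ≤ √m * δ := by
          refine euclNorm_le_sqrt_card_mul hδ.le fun i => ?_
          simpa [hq_cast, Matrix.mulVec_single, mul_comm, mul_left_comm] using (hp i).le
      _ ≤ c := by
          rw [← mul_div_assoc, div_le_iff₀ (by positivity)]
          nlinarith
  have hqM := hM ⟨(p, q), hmem, rfl⟩
  simp only [q, Pi.single_eq_same] at hqM
  have hML : M < L := by omega
  have hd1 : (1 : ℤ) ≤ d := by exact_mod_cast hd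
  nlinarith

theorem exists_lt_of_approxSet_finite {m n : ℕ} (hn : 0 < n) {α : Matrix (Fin m) (Fin n) ℝ}
    {φ : ℝ → ℝ} (hfin : (approxSet α φ).Finite) {c : ℝ} (hc : 0 < c) : ∃ x > 0, φ x < c := by
  by_contra! h
  refine approxSet_const_infinite hn α hc (hfin.subset fun pq ⟨hq, hle⟩ => ⟨hq, ?_⟩)
  exact hle.trans (h _ (one_pos.trans_le (one_le_euclNorm_intCast hq)))

theorem stmt_9_general (m n : ℕ) (hn : 0 < n) (α : Matrix (Fin m) (Fin n) ℝ)
    (φ : ℝ → ℝ)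
    (hφmono : ∀ x y : ℝ, 0 < x → x ≤ y → φ y ≤ φ x)
    -- `α` is not `φ`-approximable: only finitely many solutions with `q ≠ 0` ...
    (hfin : {pq : (Fin m → ℤ) × (Fin n → ℤ) | pq.2 ≠ 0 ∧
        euclNorm (α.mulVec (fun j => (pq.2 j : ℝ)) + (fun i => (pq.1 i : ℝ))) ≤
          φ (euclNorm fun j => (pq.2 j : ℝ))}.Finite)
    -- ... and never an exact solution `αq + p = 0` with `q ≠ 0`
    (hexact : ∀ (p : Fin m → ℤ) (q : Fin n → ℤ), q ≠ 0 →
        α.mulVec (fun j => (q j : ℝ)) + (fun i => (p i : ℝ)) ≠ 0) :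
    -- for all sufficiently large `Q`, the only point of `Λ_Q`, i.e.
    -- `g_Q u_α (p,q) = (Q^{n/m}(αq+p), Q⁻¹ q)`, in the box
    -- `‖x‖ ≤ 2^{-n/m} Φ(2Q)`, `‖y‖ ≤ 2` is the origin, where `Φ(q) = q^{n/m} φ(q)`.
    ∃ Q₀ : ℝ, 1 ≤ Q₀ ∧ ∀ Q : ℝ, Q₀ ≤ Q → ∀ (p : Fin m → ℤ) (q : Fin n → ℤ),
      euclNorm (fun i => Q ^ ((n : ℝ) / (m : ℝ)) *
          (α.mulVec (fun j => (q j : ℝ)) i + (p i : ℝ))) ≤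
        (2 : ℝ) ^ (-(n : ℝ) / (m : ℝ)) * ((2 * Q) ^ ((n : ℝ) / (m : ℝ)) * φ (2 * Q)) →
      euclNorm (fun j => Q⁻¹ * (q j : ℝ)) ≤ 2 →
      p = 0 ∧ q = 0 := by
  obtain ⟨ε, hε, hε_le⟩ := hfin.exists_pos_forall_le
    (f := fun pq => euclNorm (α.mulVec (fun j => (pq.2 j : ℝ)) + fun i => (pq.1 i : ℝ)))
    fun pq hpq => euclNorm_pos (hexact _ _ hpq.1)
  obtain ⟨x₀, hx₀, hφx₀⟩ := exists_lt_of_approxSet_finite hn hfin (lt_min hε one_pos)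
  refine ⟨max 1 x₀, le_max_left _ _, fun Q hQ p q hx hy => ?_⟩
  have hQ0 : 0 < Q := one_pos.trans_le ((le_max_left _ _).trans hQ)
  have hφQ : φ (2 * Q) < min ε 1 :=
    (hφmono _ _ hx₀ (by linarith [le_max_right 1 x₀])).trans_lt hφx₀
  have hres : euclNorm (α.mulVec (fun j => (q j : ℝ)) + fun i => (p i : ℝ)) ≤ φ (2 * Q) := by
    rwa [euclNorm_const_mul, neg_div, ← mul_assoc, Real.rpow_neg_mul_mul_rpow two_pos hQ0.le,
      abs_of_pos (by positivity), mul_le_mul_iff_right₀ (by positivity)] at hx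
  have hq_le : (euclNorm fun j => (q j : ℝ)) ≤ 2 * Q := by
    rwa [euclNorm_const_mul, abs_inv, abs_of_pos hQ0, inv_mul_le_iff₀ hQ0, mul_comm] at hy
  rcases eq_or_ne q 0 with rfl | hq0
  · refine ⟨?_, rfl⟩
    by_contra hp
    have hp_one := one_le_euclNorm_intCast hp
    simp only [Pi.zero_apply, Int.cast_zero, ← Pi.zero_def, Matrix.mulVec_zero, zero_add] at hres
    linarith [min_le_right ε 1]
  · have hε_pq := hε_le (p, q) ⟨hq0, hres.trans (hφmono _ _ (one_pos.trans_le
      (one_le_euclNorm_intCast hq0)) hq_le)⟩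
    linarith [min_le_left ε 1]

theorem stmt_9 (m n : ℕ) (hm : 0 < m) (hn : 0 < n) (α : Matrix (Fin m) (Fin n) ℝ)
    (φ : ℝ → ℝ) (hφpos : ∀ x : ℝ, 0 < x → 0 < φ x)
    (hφmono : ∀ x y : ℝ, 0 < x → x ≤ y → φ y ≤ φ x)
    -- `α` is not `φ`-approximable: only finitely many solutions with `q ≠ 0` ...
    (hfin : {pq : (Fin m → ℤ) × (Fin n → ℤ) | pq.2 ≠ 0 ∧
        euclNorm (α.mulVec (fun j => (pq.2 j : ℝ)) + (fun i => (pq.1 i : ℝ))) ≤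
          φ (euclNorm fun j => (pq.2 j : ℝ))}.Finite)
    -- ... and never an exact solution `αq + p = 0` with `q ≠ 0`
    (hexact : ∀ (p : Fin m → ℤ) (q : Fin n → ℤ), q ≠ 0 →
        α.mulVec (fun j => (q j : ℝ)) + (fun i => (p i : ℝ)) ≠ 0) :
    -- for all sufficiently large `Q`, the only point of `Λ_Q`, i.e.
    -- `g_Q u_α (p,q) = (Q^{n/m}(αq+p), Q⁻¹ q)`, in the box
    -- `‖x‖ ≤ 2^{-n/m} Φ(2Q)`, `‖y‖ ≤ 2` is the origin, where `Φ(q) = q^{n/m} φ(q)`.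
    ∃ Q₀ : ℝ, 1 ≤ Q₀ ∧ ∀ Q : ℝ, Q₀ ≤ Q → ∀ (p : Fin m → ℤ) (q : Fin n → ℤ),
      euclNorm (fun i => Q ^ ((n : ℝ) / (m : ℝ)) *
          (α.mulVec (fun j => (q j : ℝ)) i + (p i : ℝ))) ≤
        (2 : ℝ) ^ (-(n : ℝ) / (m : ℝ)) * ((2 * Q) ^ ((n : ℝ) / (m : ℝ)) * φ (2 * Q)) →
      euclNorm (fun j => Q⁻¹ * (q j : ℝ)) ≤ 2 →
      p = 0 ∧ q = 0 :=
  stmt_9_general m n hn α φ hφmono hfin hexact
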